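/- Let x > 0 and α > -1, and for each integer k ≥ 0 set I_k(β) = ∫₀^∞ x^(t+α) t^β (log t)^k / Γ(t+α+1) dt. For every odd integer n ≥ 1, the function Δ_n(β) = I_{n-1}(β) · I_{n+1}(β) − I_n(β)² is convex on (-1, ∞). -/

import Mathlib

/-!
Put `w(t) = x^(t+α) / Γ(t+α+1)` and `m = n - 1`, which is even. Writing each product of two
integrals over `(0, ∞)` as an integral over `(0, ∞)²` and symmetrizing in `(s, t)` gives
`Δ_n(β) = ½ ∬ w(s) w(t) (log s log t)^m (log s - log t)² (s t)^β ds dt`.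
The kernel is nonnegative because `m` is even, and `β ↦ (s t)^β` is convex, so `Δ_n` is an
integral of convex functions. All integrals converge for `β > -1`: near `0` because
`|log t|^k t^β ≤ C t^(β - kδ)` for small `δ > 0`, near `∞` because `Γ` outgrows every
exponential.
-/

open MeasureTheory Real Set

/-- `I_k(β) = ∫₀^∞ x^(t+α) t^β (log t)^k / Γ(t+α+1) dt`, the `k`-th derivative with
respect to `β` of `Γ(β+1) μ(x, β, α)`. -/
noncomputable def volterraI (x α : ℝ) (k : ℕ) (β : ℝ) : ℝ :=
  ∫ t in Set.Ioi (0 : ℝ),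
    x ^ (t + α) * t ^ β * (Real.log t) ^ k / Real.Gamma (t + α + 1)

open Asymptotics Filter

theorem exp_neg_two_mul_mul_rpow_le_Gamma {M y : ℝ} (hM : 0 < M) (hy : 1 ≤ y) :
    exp (-(2 * M)) * M ^ y ≤ Gamma y := by
  have hint : IntegrableOn (fun s : ℝ => exp (-s) * s ^ (y - 1)) (Ioi 0) :=
    GammaIntegral_convergent (by linarith)
  have hsub : Ioc M (2 * M) ⊆ Ioi (0 : ℝ) := fun s hs => hM.trans_le hs.1.le
  have hconst :
      exp (-(2 * M)) * M ^ y = ∫ _ in Ioc M (2 * M), exp (-(2 * M)) * M ^ (y - 1) := by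
    rw [setIntegral_const, volume_real_Ioc_of_le (by linarith), smul_eq_mul,
      show 2 * M - M = M by ring, rpow_sub hM, rpow_one]
    field_simp
  rw [Gamma_eq_integral (by linarith), hconst]
  refine (setIntegral_mono_on ?_ (hint.mono_set hsub) measurableSet_Ioc fun s hs => ?_).trans
    (setIntegral_mono_set hint ?_ hsub.eventuallyLE)
  · exact integrableOn_const (by simp)
  · gcongr
    · linarith [hs.2]
    · exact hs.1.le
  · filter_upwards [self_mem_ae_restrict measurableSet_Ioi] with s hs
    exact mul_nonneg (exp_pos _).le (rpow_nonneg (le_of_lt hs) _)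

theorem rpow_div_Gamma_isBigO_exp_neg {R : ℝ} (hR : 0 < R) (a : ℝ) :
    (fun t => R ^ t / Gamma (t + a)) =O[atTop] fun t => exp (-t) := by
  set M := R * exp 1
  have hM : 0 < M := by positivity
  refine IsBigO.of_bound (exp (2 * M) * M ^ (-a)) ?_
  filter_upwards [eventually_ge_atTop (1 - a)] with t ht
  have hΓ := exp_neg_two_mul_mul_rpow_le_Gamma hM (y := t + a) (by linarith)
  rw [norm_of_nonneg (div_nonneg (rpow_nonneg hR.le _) (hΓ.trans' (by positivity))),
    norm_of_nonneg (exp_pos _).le]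
  calc R ^ t / Gamma (t + a) ≤ R ^ t / (exp (-(2 * M)) * M ^ (t + a)) := by gcongr
    _ = exp (2 * M) * M ^ (-a) * exp (-t) := by
      rw [rpow_add hM, mul_rpow hR.le (exp_pos 1).le, exp_one_rpow, rpow_neg hM.le, exp_neg,
        exp_neg]
      field_simp

theorem rpow_mul_log_pow_isBigO_exp (β : ℝ) (k : ℕ) :
    (fun t => t ^ β * log t ^ k) =O[atTop] exp := by
  have hpow : (fun t : ℝ => t ^ β * t) =ᶠ[atTop] fun t => t ^ (β + 1) := by
    filter_upwards [eventually_gt_atTop 0] with t ht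
    rw [rpow_add ht, rpow_one]
  exact ((isBigO_refl _ _).mul isLittleO_pow_log_id_atTop.isBigO).trans
    ((isLittleO_rpow_exp_atTop (β + 1)).congr' hpow.symm EventuallyEq.rfl).isBigO

theorem integrableOn_rpow_mul_log_pow_Ioc {β : ℝ} (hβ : -1 < β) (k : ℕ) :
    IntegrableOn (fun t => t ^ β * log t ^ k) (Ioc 0 1) := by
  set δ : ℝ := (β + 1) / (2 * (k + 1))
  have hδ : 0 < δ := div_pos (by linarith) (by positivity)
  have hexp : -1 < β - k * δ := by
    have : k * δ < β + 1 := by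
      rw [mul_div_assoc', div_lt_iff₀ (by positivity)]
      nlinarith
    linarith
  refine Integrable.mono' (((intervalIntegral.intervalIntegrable_rpow' hexp).1).const_mul
    (δ⁻¹ ^ k)) (by fun_prop) ((ae_restrict_iff' measurableSet_Ioc).2 (.of_forall ?_))
  rintro t ⟨ht0, ht1⟩
  have hlog : |log t| * t ^ δ ≤ δ⁻¹ := by
    simpa [abs_mul, abs_of_pos (rpow_pos_of_pos ht0 δ)] using
      (abs_log_mul_self_rpow_lt t δ ht0 ht1 hδ).le
  calc ‖t ^ β * log t ^ k‖ = t ^ (β - k * δ) * (|log t| * t ^ δ) ^ k := by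
        rw [norm_mul, norm_pow, norm_of_nonneg (rpow_nonneg ht0.le _), Real.norm_eq_abs,
          mul_pow, ← rpow_natCast (t ^ δ), ← rpow_mul ht0.le, rpow_sub ht0]
        field_simp
    _ ≤ t ^ (β - k * δ) * δ⁻¹ ^ k := by gcongr
    _ = δ⁻¹ ^ k * t ^ (β - k * δ) := mul_comm _ _

theorem convexOn_integral {E ι : Type*} [AddCommMonoid E] [Module ℝ E] [MeasurableSpace ι]
    {μ : Measure ι} {s : Set E} {F : E → ι → ℝ} (hs : Convex ℝ s)
    (hconv : ∀ᵐ p ∂μ, ConvexOn ℝ s fun x => F x p)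
    (hint : ∀ x ∈ s, Integrable (F x) μ) : ConvexOn ℝ s fun x => ∫ p, F x p ∂μ := by
  refine ⟨hs, fun x hx y hy a b ha hb hab => ?_⟩
  have hax := (hint x hx).const_mul a
  have hby := (hint y hy).const_mul b
  calc ∫ p, F (a • x + b • y) p ∂μ ≤ ∫ p, (a * F x p + b * F y p) ∂μ := by
        refine integral_mono_ae (hint _ (hs hx hy ha hb hab)) (hax.add hby) ?_
        filter_upwards [hconv] with p hp
        exact hp.2 hx hy ha hb hab
    _ = a • ∫ p, F x p ∂μ + b • ∫ p, F y p ∂μ := by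
        rw [integral_add hax hby, integral_const_mul, integral_const_mul, smul_eq_mul,
          smul_eq_mul]

theorem integral_mul_integral_sub_sq {α : Type*} [MeasurableSpace α] {μ : Measure α}
    [SFinite μ] {f g h : α → ℝ} (hf : Integrable f μ) (hg : Integrable g μ)
    (hh : Integrable h μ) :
    (∫ a, f a ∂μ) * (∫ a, h a ∂μ) - (∫ a, g a ∂μ) ^ 2 =
      ∫ p, ((f p.1 * h p.2 + h p.1 * f p.2) / 2 - g p.1 * g p.2) ∂μ.prod μ := by
  have hfh := hf.mul_prod hh
  have hhf := hh.mul_prod hf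
  rw [integral_sub ?_ (hg.mul_prod hg), integral_div, integral_add hfh hhf, integral_prod_mul,
    integral_prod_mul, integral_prod_mul]
  · ring
  · exact (hfh.add hhf).div_const 2

noncomputable def volterraWeight (x α t : ℝ) : ℝ := x ^ (t + α) / Gamma (t + α + 1)

theorem volterraI_eq_integral_volterraWeight (x α : ℝ) (k : ℕ) (β : ℝ) :
    volterraI x α k β = ∫ t in Ioi 0, volterraWeight x α t * (t ^ β * log t ^ k) := by
  unfold volterraI volterraWeight
  congr 1 with t
  ring

section VolterraWeight

variable {x α : ℝ}

theorem volterraWeight_nonneg (hx : 0 ≤ x) {t : ℝ} (ht : -(α + 1) < t) :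
    0 ≤ volterraWeight x α t :=
  div_nonneg (rpow_nonneg hx _) (Gamma_pos_of_pos (by linarith)).le

theorem continuousOn_volterraWeight (hx : x ≠ 0) :
    ContinuousOn (volterraWeight x α) (Ioi (-(α + 1))) := by
  intro t ht
  have hpos : 0 < t + α + 1 := by rw [mem_Ioi] at ht; linarith
  refine ContinuousAt.continuousWithinAt (ContinuousAt.div ?_ ?_ (Gamma_pos_of_pos hpos).ne')
  · exact (continuousAt_const_rpow hx).comp (by fun_prop)
  · refine (differentiableAt_Gamma fun m => ?_).continuousAt.comp (by fun_prop)
    linarith [(Nat.cast_nonneg m : (0 : ℝ) ≤ m)]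

theorem volterraWeight_mul_exp_isBigO (hx : 0 < x) :
    (fun t => volterraWeight x α t * exp t) =O[atTop] fun t => exp (-t) := by
  refine ((rpow_div_Gamma_isBigO_exp_neg (mul_pos hx (exp_pos 1)) (α + 1)).const_mul_left
    (x ^ α)).congr' (.of_forall fun t => ?_) EventuallyEq.rfl
  dsimp only [volterraWeight]
  rw [mul_rpow hx.le (exp_pos 1).le, exp_one_rpow, rpow_add hx, add_assoc]
  ring

theorem integrableOn_volterraWeight_mul (hx : 0 < x) (hα : -1 < α) {β : ℝ} (hβ : -1 < β)
    (k : ℕ) : IntegrableOn (fun t => volterraWeight x α t * (t ^ β * log t ^ k)) (Ioi 0) := by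
  have hcont : ContinuousOn (fun t => volterraWeight x α t * (t ^ β * log t ^ k)) (Ioi 0) :=
    ((continuousOn_volterraWeight hx.ne').mono (Ioi_subset_Ioi (by linarith))).mul
      (by fun_prop (disch := grind))
  rw [← Ioc_union_Ioi_eq_Ioi zero_le_one]
  refine IntegrableOn.union ?_ ?_
  · have hw : ContinuousOn (volterraWeight x α) (Icc 0 1) :=
      (continuousOn_volterraWeight hx.ne').mono fun t ht => show -(α + 1) < t by linarith [ht.1]
    obtain ⟨C, hC⟩ := isCompact_Icc.exists_bound_of_continuousOn hw
    exact (integrableOn_rpow_mul_log_pow_Ioc hβ k).bdd_mul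
      ((hw.mono Ioc_subset_Icc_self).aestronglyMeasurable measurableSet_Ioc)
      ((ae_restrict_iff' measurableSet_Ioc).2
        (.of_forall fun t ht => hC t (Ioc_subset_Icc_self ht)))
  · refine integrable_of_isBigO_exp_neg one_pos (hcont.mono fun t ht => by
      simp only [mem_Ici, mem_Ioi] at ht ⊢; linarith) ?_
    simpa using ((isBigO_refl (volterraWeight x α) atTop).mul
      (rpow_mul_log_pow_isBigO_exp β k)).trans (volterraWeight_mul_exp_isBigO hx)

end VolterraWeight

noncomputable def volterraDeltaKernel (x α : ℝ) (m : ℕ) (p : ℝ × ℝ) : ℝ :=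
  volterraWeight x α p.1 * volterraWeight x α p.2 * (log p.1 * log p.2) ^ m *
    (log p.1 - log p.2) ^ 2 / 2

local notation "μ₊" => (volume.restrict (Ioi (0 : ℝ)) : Measure ℝ)

theorem ae_pos_prod_restrict_Ioi : ∀ᵐ p ∂μ₊.prod μ₊, 0 < p.1 ∧ 0 < p.2 := by
  rw [Measure.prod_restrict]
  exact ae_restrict_mem (measurableSet_Ioi.prod measurableSet_Ioi)

section VolterraDeltaKernel

variable {x α : ℝ}

theorem volterraDeltaKernel_nonneg (hx : 0 ≤ x) (hα : -1 < α) {m : ℕ} (hm : Even m)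
    {p : ℝ × ℝ} (hp : 0 < p.1 ∧ 0 < p.2) : 0 ≤ volterraDeltaKernel x α m p := by
  have h₁ := volterraWeight_nonneg hx (α := α) (t := p.1) (by linarith [hp.1])
  have h₂ := volterraWeight_nonneg hx (α := α) (t := p.2) (by linarith [hp.2])
  have := hm.pow_nonneg (log p.1 * log p.2)
  unfold volterraDeltaKernel
  positivity

theorem volterraDeltaKernel_mul_rpow_eq (m : ℕ) (β : ℝ) {p : ℝ × ℝ}
    (hp : 0 < p.1 ∧ 0 < p.2) :
    let F k t := volterraWeight x α t * (t ^ β * log t ^ k)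
    (F m p.1 * F (m + 2) p.2 + F (m + 2) p.1 * F m p.2) / 2 - F (m + 1) p.1 * F (m + 1) p.2 =
      volterraDeltaKernel x α m p * (p.1 * p.2) ^ β := by
  simp only [volterraDeltaKernel, mul_rpow hp.1.le hp.2.le]
  ring

theorem volterraI_delta_eq_integral (hx : 0 < x) (hα : -1 < α) (m : ℕ) {β : ℝ}
    (hβ : -1 < β) :
    volterraI x α m β * volterraI x α (m + 2) β - volterraI x α (m + 1) β ^ 2 =
      ∫ p, volterraDeltaKernel x α m p * (p.1 * p.2) ^ β ∂μ₊.prod μ₊ := by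
  simp only [volterraI_eq_integral_volterraWeight]
  rw [integral_mul_integral_sub_sq (integrableOn_volterraWeight_mul hx hα hβ m)
    (integrableOn_volterraWeight_mul hx hα hβ (m + 1))
    (integrableOn_volterraWeight_mul hx hα hβ (m + 2))]
  refine integral_congr_ae ?_
  filter_upwards [ae_pos_prod_restrict_Ioi] with p hp
  exact volterraDeltaKernel_mul_rpow_eq m β hp

theorem integrable_volterraDeltaKernel_mul_rpow (hx : 0 < x) (hα : -1 < α) (m : ℕ) {β : ℝ}
    (hβ : -1 < β) :
    Integrable (fun p => volterraDeltaKernel x α m p * (p.1 * p.2) ^ β) (μ₊.prod μ₊) := by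
  have hF := fun k => integrableOn_volterraWeight_mul hx hα hβ k
  refine ((((hF m).mul_prod (hF (m + 2))).add ((hF (m + 2)).mul_prod (hF m))).div_const 2
    |>.sub ((hF (m + 1)).mul_prod (hF (m + 1)))).congr ?_
  filter_upwards [ae_pos_prod_restrict_Ioi] with p hp
  exact volterraDeltaKernel_mul_rpow_eq m β hp

end VolterraDeltaKernel

/-- For odd `n ≥ 1`, `Δ_n(β) = I_{n-1}(β) I_{n+1}(β) − I_n(β)²` is convex on
`(-1, ∞)`. -/
theorem volterraI_delta_convex (x α : ℝ) (hx : 0 < x) (hα : -1 < α)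
    (n : ℕ) (hn1 : 1 ≤ n) (hn : Odd n) :
    ConvexOn ℝ (Set.Ioi (-1 : ℝ))
      (fun β : ℝ =>
        volterraI x α (n - 1) β * volterraI x α (n + 1) β -
          volterraI x α n β ^ 2) := by
  obtain ⟨m, rfl⟩ : ∃ m, n = m + 1 := ⟨n - 1, by omega⟩
  have hm : Even m := by simpa [Nat.odd_add_one] using hn
  simp only [Nat.add_sub_cancel, add_assoc, one_add_one_eq_two]
  refine (convexOn_integral (convex_Ioi _) ?_ fun β hβ =>
    integrable_volterraDeltaKernel_mul_rpow hx hα m hβ).congr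
    fun β hβ => (volterraI_delta_eq_integral hx hα m hβ).symm
  filter_upwards [ae_pos_prod_restrict_Ioi] with p hp
  exact ((convexOn_rpow_left (mul_pos hp.1 hp.2)).smul
    (volterraDeltaKernel_nonneg hx.le hα hm hp)).subset (subset_univ _) (convex_Ioi _)
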